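/- Let P be a full-support probability on 𝕊 and let V : 𝕊 → ℝ satisfy V(s) > 0 for every s ∈ 𝕊. Then the function f(ν) := Σ_{s∈𝕊} P(s)·[V(s)·ln(Σ_{q=1}^{ℓ(s)} ν(s^q)) − Σ_{q=1}^{ℓ(s)} ν(s^q)] is strictly concave on the set of positive valuations: for all ν, ν' : 𝕊 → (0, ∞) with ν ≠ ν' and all λ ∈ (0, 1), f(λ·ν + (1−λ)·ν') > λ·f(ν) + (1−λ)·f(ν'). -/

import Mathlib

open Finset

namespace CoreAttr

variable (A : Type) [Fintype A] [DecidableEq A]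

def listsLe : ℕ → Finset (List A)
  | 0 => {[]}
  | n + 1 => {[]} ∪ (Finset.univ ×ˢ listsLe n).image fun p : A × List A => p.1 :: p.2

theorem mem_listsLe (n : ℕ) (l : List A) : l ∈ listsLe A n ↔ l.length ≤ n := by
  induction n generalizing l with
  | zero => simp [listsLe, Nat.le_zero, List.length_eq_zero_iff]
  | succ n ih =>
    cases l with
    | nil => simp [listsLe]
    | cons a t => simp [listsLe, ih, Nat.succ_le_succ_iff]

/-- The set of scenarios: nonempty lists of actions of length at most `L`. -/
def scenarios (L : ℕ) : Finset (List A) := (listsLe A L).filter fun s => s ≠ []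

theorem mem_scenarios (L : ℕ) (l : List A) :
    l ∈ scenarios A L ↔ l ≠ [] ∧ l.length ≤ L := by
  simp [scenarios, mem_listsLe, and_comm]

variable {A}

/-- `P` is a probability on the finite set `𝕊`. -/
def IsProb (𝕊 : Finset (List A)) (P : List A → ℝ) : Prop :=
  (∀ s ∈ 𝕊, 0 ≤ P s) ∧ ∑ s ∈ 𝕊, P s = 1

def FullSupport (𝕊 : Finset (List A)) (P : List A → ℝ) : Prop :=
  ∀ s ∈ 𝕊, 0 < P s

/-- `μ` is an internal attribution for the reward `V`. -/
def IsInternalAttr (𝕊 : Finset (List A)) (V : List A → ℝ) (μ : ℕ → List A → ℝ) : Prop :=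
  (∀ i : ℕ, ∀ s ∈ 𝕊, 0 ≤ μ i s) ∧
  (∀ i : ℕ, ∀ s ∈ 𝕊, ¬(1 ≤ i ∧ i ≤ s.length) → μ i s = 0) ∧
  (∀ s ∈ 𝕊, ∑ i ∈ Finset.Icc 1 s.length, μ i s = V s)

/-- The valuation associated with attribution `μ` under probability `P`:
`ν_P^μ(s) = E_{S∼P}[μ(ℓ(s), S) | S ≽ s]`. -/
noncomputable def assocVal (𝕊 : Finset (List A)) (P : List A → ℝ) (μ : ℕ → List A → ℝ)
    (s : List A) : ℝ :=
  (∑ s' ∈ 𝕊.filter (fun s' => s <+: s'), P s' * μ s.length s') /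
    (∑ s' ∈ 𝕊.filter (fun s' => s <+: s'), P s')

/-- `Σ_{j=1}^{ℓ(s)} ν(s^j)`. -/
noncomputable def sumPrefix (ν : List A → ℝ) (s : List A) : ℝ :=
  ∑ j ∈ Finset.Icc 1 s.length, ν (s.take j)

/-- The fixed-point attribution `μ_ν`. -/
noncomputable def muFP (V ν : List A → ℝ) (i : ℕ) (s : List A) : ℝ :=
  if 1 ≤ i ∧ i ≤ s.length then ν (s.take i) * V s / sumPrefix ν s else 0

/-- The MM objective `f`. -/
noncomputable def fObj (𝕊 : Finset (List A)) (P V ν : List A → ℝ) : ℝ :=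
  ∑ s ∈ 𝕊, P s * (V s * Real.log (sumPrefix ν s) - sumPrefix ν s)

/-- The MM surrogate `g(ν | ν̂)`. -/
noncomputable def gSurr (𝕊 : Finset (List A)) (P V ν νh : List A → ℝ) : ℝ :=
  ∑ s ∈ 𝕊, P s * ∑ j ∈ Finset.Icc 1 s.length,
    (νh (s.take j) * V s / sumPrefix νh s *
        Real.log (ν (s.take j) / νh (s.take j) * sumPrefix νh s) -
      ν (s.take j))

lemma take_mem_scenarios {A : Type} [Fintype A] [DecidableEq A] {L : ℕ} {s : List A}
    (hs : s ∈ scenarios A L) {j : ℕ} (hj1 : 1 ≤ j) :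
    s.take j ∈ scenarios A L := by
  rw [mem_scenarios] at hs ⊢
  constructor
  · intro h
    rcases List.take_eq_nil_iff.1 h with h | h
    · omega
    · exact hs.1 h
  · rw [List.length_take]
    exact le_trans (min_le_right _ _) hs.2

lemma scenario_length_pos {A : Type} [Fintype A] [DecidableEq A] {L : ℕ} {s : List A}
    (hs : s ∈ scenarios A L) : 1 ≤ s.length :=
  List.length_pos_iff.2 ((mem_scenarios A L s).1 hs).1

lemma sumPrefix_pos {A : Type} [Fintype A] [DecidableEq A] {L : ℕ} {s : List A}
    (hs : s ∈ scenarios A L) {ν : List A → ℝ} (hν : ∀ t ∈ scenarios A L, 0 < ν t) :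
    0 < sumPrefix ν s := by
  apply Finset.sum_pos
  · intro j hj
    exact hν _ (take_mem_scenarios hs (Finset.mem_Icc.1 hj).1)
  · exact ⟨1, Finset.mem_Icc.2 ⟨le_refl 1, scenario_length_pos hs⟩⟩

lemma core_concave_le {x y v lam : ℝ} (hx : 0 < x) (hy : 0 < y) (hv : 0 < v)
    (h0 : 0 < lam) (h1 : lam < 1) :
    lam * (v * Real.log x - x) + (1 - lam) * (v * Real.log y - y)
      ≤ v * Real.log (lam * x + (1 - lam) * y) - (lam * x + (1 - lam) * y) := by
  have hlog := strictConcaveOn_log_Ioi.concaveOn.2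
    (Set.mem_Ioi.2 hx) (Set.mem_Ioi.2 hy) (le_of_lt h0)
    (sub_nonneg.2 h1.le : (0:ℝ) ≤ 1 - lam) (by ring)
  simp only [smul_eq_mul] at hlog
  nlinarith [mul_le_mul_of_nonneg_left hlog hv.le]

lemma core_concave_lt {x y v lam : ℝ} (hx : 0 < x) (hy : 0 < y) (hv : 0 < v)
    (hne : x ≠ y) (h0 : 0 < lam) (h1 : lam < 1) :
    lam * (v * Real.log x - x) + (1 - lam) * (v * Real.log y - y)
      < v * Real.log (lam * x + (1 - lam) * y) - (lam * x + (1 - lam) * y) := by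
  have hlog := strictConcaveOn_log_Ioi.2
    (Set.mem_Ioi.2 hx) (Set.mem_Ioi.2 hy) hne h0
    (sub_pos.2 h1 : (0:ℝ) < 1 - lam) (by ring)
  simp only [smul_eq_mul] at hlog
  nlinarith [mul_lt_mul_of_pos_left hlog hv]

/-- **Strict concavity of the MM objective `f` on positive valuations.** -/
theorem fObj_strictly_concave
    {A : Type} [Fintype A] [DecidableEq A] [Nonempty A] (L : ℕ) (hL : 1 ≤ L)
    (P : List A → ℝ) (hP : IsProb (scenarios A L) P)
    (hPfull : FullSupport (scenarios A L) P)
    (V : List A → ℝ) (hVpos : ∀ s ∈ scenarios A L, 0 < V s) :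
    ∀ ν ν' : List A → ℝ,
      (∀ s ∈ scenarios A L, 0 < ν s) → (∀ s ∈ scenarios A L, 0 < ν' s) →
      (∃ s ∈ scenarios A L, ν s ≠ ν' s) →
      ∀ lam : ℝ, 0 < lam → lam < 1 →
        lam * fObj (scenarios A L) P V ν + (1 - lam) * fObj (scenarios A L) P V ν' <
          fObj (scenarios A L) P V (fun s => lam * ν s + (1 - lam) * ν' s) := by
  intro ν ν' hν hν' hdiff lam hl0 hl1
  obtain ⟨s₀, hs₀, hd₀⟩ := hdiff
  obtain ⟨t, ht, htmin⟩ := Finset.exists_min_image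
    ((scenarios A L).filter fun s => ν s ≠ ν' s) List.length
    ⟨s₀, Finset.mem_filter.2 ⟨hs₀, hd₀⟩⟩
  rw [Finset.mem_filter] at ht
  have htS := ht.1
  have hlin : ∀ s : List A, sumPrefix (fun u => lam * ν u + (1 - lam) * ν' u) s
      = lam * sumPrefix ν s + (1 - lam) * sumPrefix ν' s := by
    intro s
    simp [sumPrefix, Finset.mul_sum, Finset.sum_add_distrib]
  have hsum_ne : sumPrefix ν t ≠ sumPrefix ν' t := by
    have hn : 1 ≤ t.length := scenario_length_pos htS
    have key : sumPrefix ν t - sumPrefix ν' t = ν t - ν' t := by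
      rw [sumPrefix, sumPrefix, ← Finset.sum_sub_distrib]
      rw [Finset.sum_eq_single_of_mem t.length (Finset.mem_Icc.2 ⟨hn, le_refl _⟩)]
      · rw [List.take_length]
      · intro j hj hjne
        have hjIcc := Finset.mem_Icc.1 hj
        have htj : t.take j ∈ scenarios A L := take_mem_scenarios htS hjIcc.1
        have heq : ν (t.take j) = ν' (t.take j) := by
          by_contra hne
          have hm := htmin _ (Finset.mem_filter.2 ⟨htj, hne⟩)
          rw [List.length_take] at hm
          have hjlt : j < t.length := lt_of_le_of_ne hjIcc.2 hjne
          omega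
        rw [heq, sub_self]
    intro h
    apply ht.2
    rw [h, sub_self] at key
    linarith
  unfold fObj
  rw [Finset.mul_sum, Finset.mul_sum, ← Finset.sum_add_distrib]
  apply Finset.sum_lt_sum
  · intro s hs
    rw [← mul_assoc, ← mul_assoc, mul_comm lam (P s), mul_comm (1 - lam) (P s),
      mul_assoc, mul_assoc, ← mul_add]
    apply mul_le_mul_of_nonneg_left _ (le_of_lt (hPfull s hs))
    rw [hlin]
    exact core_concave_le (sumPrefix_pos hs hν) (sumPrefix_pos hs hν') (hVpos s hs) hl0 hl1
  · refine ⟨t, htS, ?_⟩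
    rw [← mul_assoc, ← mul_assoc, mul_comm lam (P t), mul_comm (1 - lam) (P t),
      mul_assoc, mul_assoc, ← mul_add]
    apply mul_lt_mul_of_pos_left _ (hPfull t htS)
    rw [hlin]
    exact core_concave_lt (sumPrefix_pos htS hν) (sumPrefix_pos htS hν') (hVpos t htS)
      hsum_ne hl0 hl1

end CoreAttr
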